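/- Let n ≥ 3 and let a ∈ A_n be a doubly pure element with ‖a‖ = 1. Then the real-linear map from the quaternions ℍ to A_n determined by 1 ↦ e_0, i ↦ ã, j ↦ a, k ↦ ẽ_0 is an injective ℝ-algebra homomorphism; in particular its image, the linear span of {e_0, ã, a, ẽ_0}, is a 4-dimensional subalgebra of A_n isomorphic to ℍ. -/

import Mathlib

noncomputable section

open scoped Quaternion

/-- The Cayley–Dickson algebra `A n = ℝ^(2^n)` as a type. -/
def CD : ℕ → Type
  | 0 => ℝ
  | n + 1 => CD n × CD n

namespace CD

instance instAddCommGroup : (n : ℕ) → AddCommGroup (CD n)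
  | 0 => inferInstanceAs (AddCommGroup ℝ)
  | n + 1 =>
    letI := instAddCommGroup n
    inferInstanceAs (AddCommGroup (CD n × CD n))

instance instModule : (n : ℕ) → Module ℝ (CD n)
  | 0 => inferInstanceAs (Module ℝ ℝ)
  | n + 1 =>
    letI := instModule n
    inferInstanceAs (Module ℝ (CD n × CD n))

/-- Conjugation in the Cayley–Dickson algebra. -/
def conj : {n : ℕ} → CD n → CD n
  | 0, x => x
  | _ + 1, x => (conj x.1, -x.2)

/-- Cayley–Dickson multiplication. -/
def mul : {n : ℕ} → CD n → CD n → CD n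
  | 0, x, y => Mul.mul (α := ℝ) x y
  | _ + 1, x, y =>
    (mul x.1 y.1 - mul (conj y.2) x.2, mul y.2 x.1 + mul x.2 (conj y.1))

instance instMul (n : ℕ) : Mul (CD n) := ⟨mul⟩

/-- The multiplicative unit `e₀`. -/
def one : {n : ℕ} → CD n
  | 0 => (1 : ℝ)
  | _ + 1 => (one, 0)

instance instOne (n : ℕ) : One (CD n) := ⟨one⟩

/-- The Euclidean inner product on `A n = ℝ^(2^n)`. -/
def inner : {n : ℕ} → CD n → CD n → ℝ
  | 0, x, y => (x * y : ℝ)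
  | _ + 1, x, y => inner x.1 y.1 + inner x.2 y.2

/-- The Euclidean norm on `A n = ℝ^(2^n)`. -/
def norm {n : ℕ} (x : CD n) : ℝ := Real.sqrt (inner x x)

/-- `ã = (-a₂, a₁)`. -/
def tilde {n : ℕ} (a : CD (n + 1)) : CD (n + 1) := (-a.2, a.1)

/-- `ẽ₀ = (0, e₀)`. -/
def etilde (n : ℕ) : CD (n + 1) := ((0 : CD n), (1 : CD n))

/-- An element is pure if its conjugate is its negative. -/
def IsPure {n : ℕ} (a : CD n) : Prop := conj a = -a

/-- An element of `A (n+1)` is doubly pure if both of its coordinates are pure. -/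
def IsDoublyPure {n : ℕ} (a : CD (n + 1)) : Prop := IsPure a.1 ∧ IsPure a.2

/-- The associator `(a,b,c) = (ab)c - a(bc)`. -/
def assoc {n : ℕ} (a b c : CD n) : CD n := a * b * c - a * (b * c)

/-- An element is alternative if `(a,a,x) = 0` for all `x`. -/
def IsAlternative {n : ℕ} (a : CD n) : Prop := ∀ x : CD n, assoc a a x = 0

/-- An element is strongly alternative if `(a,a,x) = 0` and `(a,x,x) = 0` for all `x`. -/
def IsStronglyAlternative {n : ℕ} (a : CD n) : Prop :=
  (∀ x : CD n, assoc a a x = 0) ∧ (∀ x : CD n, assoc a x x = 0)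

/-- The pure (imaginary) part of an element. -/
def im {n : ℕ} (a : CD n) : CD n := (2⁻¹ : ℝ) • (a - conj a)

/-- `H a`, the span of `{e₀, ã, a, ẽ₀}`. -/
def H {n : ℕ} (a : CD (n + 1)) : Submodule ℝ (CD (n + 1)) :=
  Submodule.span ℝ {(1 : CD (n + 1)), tilde a, a, etilde n}

/-- The orthogonal complement of `H a`. -/
def Hperp {n : ℕ} (a : CD (n + 1)) : Set (CD (n + 1)) :=
  {x | ∀ y ∈ H a, inner y x = 0}

end CD


/-!
For doubly pure `a = (a₁, a₂)`, the doubling formula together with `conj aᵢ = -aᵢ` and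
`x x = -‖x‖² e₀` for pure `x` gives `ã a = ‖a‖² ẽ₀ = -a ã`, `a ẽ₀ = ã = -ẽ₀ a`,
`ẽ₀ ã = a = -ã ẽ₀`, `a a = ã ã = -‖a‖² e₀` and `ẽ₀ ẽ₀ = -e₀`. For `‖a‖ = 1` this is the
multiplication table of `i = ã`, `j = a`, `k = ẽ₀`, so bilinearity of the product makes the
map multiplicative, with no associativity needed. Purity of `a₁, a₂` also makes
`e₀, ã, a, ẽ₀` pairwise orthogonal, hence linearly independent: the map is injective with
four-dimensional image.
-/

namespace CD

variable {n : ℕ}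

@[ext]
theorem ext {x y : CD (n + 1)} (h₁ : x.1 = y.1) (h₂ : x.2 = y.2) : x = y := Prod.ext h₁ h₂

section Components

variable (x y : CD (n + 1)) (r : ℝ)

@[simp] theorem fst_add : (x + y).1 = x.1 + y.1 := rfl
@[simp] theorem snd_add : (x + y).2 = x.2 + y.2 := rfl
@[simp] theorem fst_neg : (-x).1 = -x.1 := rfl
@[simp] theorem snd_neg : (-x).2 = -x.2 := rfl
@[simp] theorem fst_smul : (r • x).1 = r • x.1 := rfl
@[simp] theorem snd_smul : (r • x).2 = r • x.2 := rfl
@[simp] theorem fst_one : (1 : CD (n + 1)).1 = 1 := rfl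
@[simp] theorem snd_one : (1 : CD (n + 1)).2 = 0 := rfl
@[simp] theorem fst_conj : (conj x).1 = conj x.1 := rfl
@[simp] theorem snd_conj : (conj x).2 = -x.2 := rfl
@[simp] theorem fst_mul : (x * y).1 = x.1 * y.1 - conj y.2 * x.2 := rfl
@[simp] theorem snd_mul : (x * y).2 = y.2 * x.1 + x.2 * conj y.1 := rfl
@[simp] theorem inner_succ : inner x y = inner x.1 y.1 + inner x.2 y.2 := rfl
@[simp] theorem fst_tilde : (tilde x).1 = -x.2 := rfl
@[simp] theorem snd_tilde : (tilde x).2 = x.1 := rfl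
@[simp] theorem fst_etilde : (etilde n).1 = 0 := rfl
@[simp] theorem snd_etilde : (etilde n).2 = 1 := rfl

end Components

@[simp]
theorem conj_add (x y : CD n) : conj (x + y) = conj x + conj y := by
  induction n with
  | zero => rfl
  | succ n ih => ext <;> simp [ih, add_comm]

@[simp]
theorem conj_smul (r : ℝ) (x : CD n) : conj (r • x) = r • conj x := by
  induction n with
  | zero => rfl
  | succ n ih => ext <;> simp [ih]

def conjₗ (n : ℕ) : CD n →ₗ[ℝ] CD n where
  toFun := conj
  map_add' := conj_add
  map_smul' := conj_smul

@[simp] theorem conj_zero : conj (0 : CD n) = 0 := map_zero (conjₗ n)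
@[simp] theorem conj_neg (x : CD n) : conj (-x) = -conj x := map_neg (conjₗ n) x

@[simp]
theorem conj_conj (x : CD n) : conj (conj x) = x := by
  induction n with
  | zero => rfl
  | succ n ih => ext <;> simp [ih]

@[simp]
theorem conj_one : conj (1 : CD n) = 1 := by
  induction n with
  | zero => rfl
  | succ n ih => ext <;> simp [ih]

theorem mul_add_and_add_mul (x y z : CD n) :
    x * (y + z) = x * y + x * z ∧ (x + y) * z = x * z + y * z := by
  induction n with
  | zero => exact ⟨mul_add (R := ℝ) x y z, add_mul (R := ℝ) x y z⟩
  | succ n ih =>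
    constructor <;> ext <;>
      simp only [fst_mul, snd_mul, fst_add, snd_add, conj_add, (ih _ _ _).1, (ih _ _ _).2] <;> abel

theorem smul_mul_and_mul_smul (r : ℝ) (x y : CD n) :
    (r • x) * y = r • (x * y) ∧ x * (r • y) = r • (x * y) := by
  induction n with
  | zero => exact ⟨mul_assoc (G := ℝ) r x y, mul_left_comm (G := ℝ) x r y⟩
  | succ n ih =>
    constructor <;> ext <;> simp [(ih _ _).1, (ih _ _).2, smul_sub, smul_add]

-- Scoped, so that outside `CD` the operations of `CD n` keep resolving to the primitive instances.
scoped instance instNonUnitalNonAssocRing (n : ℕ) : NonUnitalNonAssocRing (CD n) where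
  left_distrib x y z := (mul_add_and_add_mul x y z).1
  right_distrib x y z := (mul_add_and_add_mul x y z).2
  zero_mul x := by simpa using (smul_mul_and_mul_smul 0 x x).1
  mul_zero x := by simpa using (smul_mul_and_mul_smul 0 x x).2

scoped instance (n : ℕ) : IsScalarTower ℝ (CD n) (CD n) :=
  ⟨fun r x y => (smul_mul_and_mul_smul r x y).1⟩

scoped instance (n : ℕ) : SMulCommClass ℝ (CD n) (CD n) :=
  ⟨fun r x y => ((smul_mul_and_mul_smul r x y).2).symm⟩

theorem one_mul_and_mul_one (x : CD n) : 1 * x = x ∧ x * 1 = x := by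
  induction n with
  | zero => exact ⟨one_mul (M := ℝ) x, mul_one (M := ℝ) x⟩
  | succ n ih =>
    constructor <;> ext <;> simp [(ih _).1, (ih _).2]

scoped instance instNonAssocRing (n : ℕ) : NonAssocRing (CD n) where
  one_mul x := (one_mul_and_mul_one x).1
  mul_one x := (one_mul_and_mul_one x).2

theorem inner_comm (x y : CD n) : inner x y = inner y x := by
  induction n with
  | zero => exact mul_comm (G := ℝ) x y
  | succ n ih => simp [ih x.1, ih x.2]

theorem inner_add_right (x y z : CD n) : inner x (y + z) = inner x y + inner x z := by
  induction n with
  | zero => exact mul_add (R := ℝ) x y z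
  | succ n ih => simp only [inner_succ, fst_add, snd_add, ih]; ring

theorem inner_smul_right (r : ℝ) (x y : CD n) : inner x (r • y) = r * inner x y := by
  induction n with
  | zero => exact mul_left_comm (G := ℝ) x r y
  | succ n ih => simp only [inner_succ, fst_smul, snd_smul, ih]; ring

def innerₗ (n : ℕ) : LinearMap.BilinForm ℝ (CD n) :=
  LinearMap.mk₂ ℝ inner
    (fun x y z => by simp only [inner_comm _ z, inner_add_right])
    (fun r x y => by simp only [inner_comm _ y, inner_smul_right, smul_eq_mul])
    inner_add_right inner_smul_right

@[simp] theorem innerₗ_apply (x y : CD n) : innerₗ n x y = inner x y := rfl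

@[simp] theorem inner_zero_right (x : CD n) : inner x 0 = 0 := map_zero (innerₗ n x)
@[simp] theorem inner_zero_left (x : CD n) : inner 0 x = 0 := LinearMap.map_zero₂ (innerₗ n) x
@[simp] theorem inner_neg_right (x y : CD n) : inner x (-y) = -inner x y := map_neg (innerₗ n x) y
@[simp] theorem inner_neg_left (x y : CD n) : inner (-x) y = -inner x y :=
  LinearMap.map_neg₂ (innerₗ n) x y

@[simp]
theorem inner_one_one : inner (1 : CD n) 1 = 1 := by
  induction n with
  | zero => exact mul_one (M := ℝ) 1
  | succ n ih => simp [ih]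

theorem inner_one_conj (x : CD n) : inner 1 (conj x) = inner 1 x := by
  induction n with
  | zero => rfl
  | succ n ih => simp [ih]

theorem conj_mul_self_and_mul_conj_self (x : CD n) :
    conj x * x = inner x x • 1 ∧ x * conj x = inner x x • 1 := by
  induction n with
  | zero => exact ⟨(mul_one (M := ℝ) _).symm, (mul_one (M := ℝ) _).symm⟩
  | succ n ih =>
    constructor <;> ext <;> simp [(ih _).1, (ih _).2, add_smul, sub_eq_add_neg]

theorem conj_mul_self (x : CD n) : conj x * x = inner x x • 1 :=
  (conj_mul_self_and_mul_conj_self x).1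

theorem mul_conj_self (x : CD n) : x * conj x = inner x x • 1 :=
  (conj_mul_self_and_mul_conj_self x).2

namespace IsPure

variable {x : CD n}

theorem conj_eq (hx : IsPure x) : conj x = -x := hx

theorem mul_self (hx : IsPure x) : x * x = -(inner x x • 1) := by
  rw [← conj_mul_self, hx, neg_mul, neg_neg]

theorem inner_one_left (hx : IsPure x) : inner 1 x = 0 := by
  have h := inner_one_conj x
  rw [hx, inner_neg_right] at h
  linarith

theorem inner_one_right (hx : IsPure x) : inner x 1 = 0 := by
  rw [inner_comm, hx.inner_one_left]

end IsPure

theorem IsDoublyPure.isPure {a : CD (n + 1)} (ha : IsDoublyPure a) : IsPure a := by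
  ext
  · exact ha.1
  · rfl

theorem isDoublyPure_tilde {a : CD (n + 1)} (ha : IsDoublyPure a) : IsDoublyPure (tilde a) :=
  ⟨by simp [IsPure, ha.2.conj_eq], ha.1⟩

theorem inner_tilde_tilde (a : CD (n + 1)) : inner (tilde a) (tilde a) = inner a a := by
  simp [add_comm]

theorem mul_etilde (a : CD (n + 1)) : a * etilde n = tilde a := by
  ext <;> simp

theorem tilde_tilde (a : CD (n + 1)) : tilde (tilde a) = -a := by
  ext <;> simp

theorem tilde_etilde : tilde (etilde n) = -1 := by
  ext <;> simp

namespace IsDoublyPure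

variable {a : CD (n + 1)} (ha : IsDoublyPure a)
include ha

theorem etilde_mul : etilde n * a = -tilde a := by
  ext <;> simp [ha.1.conj_eq, ha.2.conj_eq]

theorem etilde_mul_tilde : etilde n * tilde a = a := by
  ext <;> simp [ha.1.conj_eq, ha.2.conj_eq]

theorem tilde_mul : tilde a * a = inner a a • etilde n := by
  ext <;> simp [ha.2.conj_eq, ha.2.mul_self, mul_conj_self, add_smul, add_comm]

theorem mul_tilde : a * tilde a = -(inner a a • etilde n) := by
  ext <;> simp [ha.1.conj_eq, ha.2.conj_eq, ha.1.mul_self, ha.2.mul_self, add_smul, add_comm]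

end IsDoublyPure

def quaternionFrame (a : CD (n + 1)) : Fin 4 → CD (n + 1) := ![1, tilde a, a, etilde n]

theorem range_quaternionFrame (a : CD (n + 1)) :
    Set.range (quaternionFrame a) = {1, tilde a, a, etilde n} := by
  simp only [quaternionFrame, Matrix.range_cons, Matrix.range_empty, Set.union_empty,
    Set.singleton_union]

theorem linearIndependent_quaternionFrame {a : CD (n + 1)} (ha : IsDoublyPure a)
    (ha₀ : inner a a ≠ 0) : LinearIndependent ℝ (quaternionFrame a) := by
  refine LinearMap.BilinForm.linearIndependent_of_iIsOrtho (B := innerₗ (n + 1)) ?_ ?_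
  · rw [LinearMap.BilinForm.iIsOrtho_def]
    intro i j hij
    fin_cases i <;> fin_cases j <;>
      simp [quaternionFrame, ha.1.inner_one_left, ha.1.inner_one_right, ha.2.inner_one_left,
        ha.2.inner_one_right, inner_comm a.2 a.1] at hij ⊢
  · intro i
    fin_cases i <;> simp_all [quaternionFrame, add_comm]

def quaternionMap (a : CD (n + 1)) : ℍ →ₗ[ℝ] CD (n + 1) where
  toFun q := q.re • 1 + q.imI • tilde a + q.imJ • a + q.imK • etilde n
  map_add' p q := by
    simp only [Quaternion.re_add, Quaternion.imI_add, Quaternion.imJ_add, Quaternion.imK_add]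
    module
  map_smul' r q := by
    simp only [Quaternion.re_smul, Quaternion.imI_smul, Quaternion.imJ_smul,
      Quaternion.imK_smul, smul_eq_mul, RingHom.id_apply]
    module

theorem quaternionMap_apply (a : CD (n + 1)) (q : ℍ) :
    quaternionMap a q = q.re • 1 + q.imI • tilde a + q.imJ • a + q.imK • etilde n := rfl

theorem coe_quaternionMap (a : CD (n + 1)) :
    ⇑(quaternionMap a) =
      Fintype.linearCombination ℝ (quaternionFrame a) ∘ Quaternion.equivTuple ℝ := by
  funext q
  simp [quaternionMap_apply, quaternionFrame, Fintype.linearCombination_apply, Fin.sum_univ_four,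
    add_assoc]

theorem quaternionMap_injective {a : CD (n + 1)} (h : LinearIndependent ℝ (quaternionFrame a)) :
    Function.Injective (quaternionMap a) := by
  rw [coe_quaternionMap]
  exact h.fintypeLinearCombination_injective.comp (Quaternion.equivTuple ℝ).injective

theorem range_quaternionMap (a : CD (n + 1)) :
    Set.range (quaternionMap a) = Submodule.span ℝ {1, tilde a, a, etilde n} := by
  rw [coe_quaternionMap, (Quaternion.equivTuple ℝ).surjective.range_comp, ← LinearMap.coe_range,
    Fintype.range_linearCombination, range_quaternionFrame]

theorem quaternionMap_one (a : CD (n + 1)) : quaternionMap a 1 = 1 := by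
  simp [quaternionMap_apply]

theorem quaternionMap_mul {a : CD (n + 1)} (ha : IsDoublyPure a) (ha₁ : inner a a = 1) (p q : ℍ) :
    quaternionMap a (p * q) = quaternionMap a p * quaternionMap a q := by
  simp only [quaternionMap_apply, Quaternion.re_mul, Quaternion.imI_mul, Quaternion.imJ_mul,
    Quaternion.imK_mul, mul_add, add_mul, smul_mul_assoc, mul_smul_comm, one_mul, mul_one,
    ha.isPure.mul_self, (isDoublyPure_tilde ha).isPure.mul_self, inner_tilde_tilde, ha₁,
    mul_etilde, tilde_tilde, tilde_etilde, ha.etilde_mul, ha.etilde_mul_tilde,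
    ha.tilde_mul, ha.mul_tilde, one_smul, smul_neg]
  module

end CD

theorem quaternion_embedding_of_doublyPure_general (n : ℕ) (a : CD (n + 1))
    (ha : CD.IsDoublyPure a) (hnorm : CD.norm a = 1) :
    ∃ φ : ℍ → CD (n + 1),
      (∀ q : ℍ, φ q =
        q.re • (1 : CD (n + 1)) + q.imI • CD.tilde a + q.imJ • a + q.imK • CD.etilde n) ∧
      Function.Injective φ ∧
      φ 1 = 1 ∧
      (∀ p q : ℍ, φ (p * q) = φ p * φ q) ∧
      (∀ p q : ℍ, φ (p + q) = φ p + φ q) ∧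
      (∀ (r : ℝ) (p : ℍ), φ (r • p) = r • φ p) ∧
      Set.range φ =
        (Submodule.span ℝ
          ({(1 : CD (n + 1)), CD.tilde a, a, CD.etilde n} : Set (CD (n + 1))) : Set (CD (n + 1))) ∧
      Module.finrank ℝ
        (Submodule.span ℝ
          ({(1 : CD (n + 1)), CD.tilde a, a, CD.etilde n} : Set (CD (n + 1)))) = 4 := by
  have ha₁ : CD.inner a a = 1 := Real.sqrt_eq_one.mp hnorm
  have hind : LinearIndependent ℝ (CD.quaternionFrame a) :=
    CD.linearIndependent_quaternionFrame ha (ha₁ ▸ one_ne_zero)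
  refine ⟨CD.quaternionMap a, CD.quaternionMap_apply a, CD.quaternionMap_injective hind,
    CD.quaternionMap_one a, CD.quaternionMap_mul ha ha₁, map_add _, map_smul _,
    CD.range_quaternionMap a, ?_⟩
  rw [← CD.range_quaternionFrame, finrank_span_eq_card hind, Fintype.card_fin]

/-- For `n ≥ 3` and `a` doubly pure of norm one, the real-linear map
`ℍ → A n` with `1 ↦ e₀`, `i ↦ ã`, `j ↦ a`, `k ↦ ẽ₀` is an injective ℝ-algebra
homomorphism, and its image is the span of `{e₀, ã, a, ẽ₀}`, a 4-dimensional
subalgebra isomorphic to `ℍ`. -/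
theorem quaternion_embedding_of_doublyPure (n : ℕ) (hn : 3 ≤ n + 1) (a : CD (n + 1))
    (ha : CD.IsDoublyPure a) (hnorm : CD.norm a = 1) :
    ∃ φ : ℍ → CD (n + 1),
      (∀ q : ℍ, φ q =
        q.re • (1 : CD (n + 1)) + q.imI • CD.tilde a + q.imJ • a + q.imK • CD.etilde n) ∧
      Function.Injective φ ∧
      φ 1 = 1 ∧
      (∀ p q : ℍ, φ (p * q) = φ p * φ q) ∧
      (∀ p q : ℍ, φ (p + q) = φ p + φ q) ∧
      (∀ (r : ℝ) (p : ℍ), φ (r • p) = r • φ p) ∧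
      Set.range φ =
        (Submodule.span ℝ
          ({(1 : CD (n + 1)), CD.tilde a, a, CD.etilde n} : Set (CD (n + 1))) : Set (CD (n + 1))) ∧
      Module.finrank ℝ
        (Submodule.span ℝ
          ({(1 : CD (n + 1)), CD.tilde a, a, CD.etilde n} : Set (CD (n + 1)))) = 4 :=
  quaternion_embedding_of_doublyPure_general n a ha hnorm
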